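/- arXiv:2302.02019 — 4 statements merged into one kernel-verified Lean document; each statement's English description precedes it below -/
import Mathlib

section
/- For integers n and i with 2 ≤ i ≤ n/2, the Catalan numbers satisfy C_{i−1}·C_{n−i−1} ≤ C_{i−2}·C_{n−i}, equivalently the ratio (C_{i−1} C_{n−i−1})/(C_{i−2} C_{n−i}) = (2i−3)(n−i+1)/(i(2n−2i−1)) is at most 1. -/
lemma catalan_rec (a : ℕ) : (a + 2) * catalan (a + 1) = (4 * a + 2) * catalan a := by
  apply Nat.eq_of_mul_eq_mul_left (show 0 < a + 1 by omega)
  have h1 : (a + 1 + 1) * catalan (a + 1) = Nat.centralBinom (a + 1) :=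
    succ_mul_catalan_eq_centralBinom (a + 1)
  have h2 : (a + 1) * Nat.centralBinom (a + 1) = 2 * (2 * a + 1) * Nat.centralBinom a :=
    Nat.succ_mul_centralBinom_succ a
  have h3 : (a + 1) * catalan a = Nat.centralBinom a :=
    succ_mul_catalan_eq_centralBinom a
  calc (a + 1) * ((a + 2) * catalan (a + 1))
      = (a + 1) * ((a + 1 + 1) * catalan (a + 1)) := by ring_nf
    _ = (a + 1) * Nat.centralBinom (a + 1) := by rw [h1]
    _ = 2 * (2 * a + 1) * Nat.centralBinom a := h2
    _ = 2 * (2 * a + 1) * ((a + 1) * catalan a) := by rw [h3]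
    _ = (a + 1) * ((4 * a + 2) * catalan a) := by ring

lemma catalan_key (a b : ℕ) (hab : a ≤ b) :
    catalan (a + 1) * catalan b ≤ catalan a * catalan (b + 1) ∧
    (2 + a) * (2 * b + 1) * (catalan (a + 1) * catalan b) =
      (2 * a + 1) * (b + 2) * (catalan a * catalan (b + 1)) := by
  have h1 := catalan_rec a
  have h2 := catalan_rec b
  have heq : (2 + a) * (2 * b + 1) * (catalan (a + 1) * catalan b) =
      (2 * a + 1) * (b + 2) * (catalan a * catalan (b + 1)) := by
    calc (2 + a) * (2 * b + 1) * (catalan (a + 1) * catalan b)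
        = (2 * b + 1) * catalan b * ((a + 2) * catalan (a + 1)) := by ring
      _ = (2 * b + 1) * catalan b * ((4 * a + 2) * catalan a) := by rw [h1]
      _ = (2 * a + 1) * catalan a * ((4 * b + 2) * catalan b) := by ring
      _ = (2 * a + 1) * catalan a * ((b + 2) * catalan (b + 1)) := by rw [h2]
      _ = (2 * a + 1) * (b + 2) * (catalan a * catalan (b + 1)) := by ring
  refine ⟨?_, heq⟩
  have hc : (2 * a + 1) * (b + 2) ≤ (2 + a) * (2 * b + 1) := by nlinarith
  have : (2 + a) * (2 * b + 1) * (catalan (a + 1) * catalan b) ≤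
      (2 + a) * (2 * b + 1) * (catalan a * catalan (b + 1)) := by
    rw [heq]
    exact Nat.mul_le_mul_right _ hc
  exact Nat.le_of_mul_le_mul_left this (by positivity)

/-- For `2 ≤ i ≤ n/2` the Catalan numbers satisfy
`C_{i-1} C_{n-i-1} ≤ C_{i-2} C_{n-i}`; equivalently, the ratio of the two sides equals
`(2i-3)(n-i+1) / (i(2n-2i-1))`, which is at most `1`. -/
theorem catalan_split_inequality (n i : ℕ) (hi : 2 ≤ i) (hn : 2 * i ≤ n) :
    catalan (i - 1) * catalan (n - i - 1) ≤ catalan (i - 2) * catalan (n - i) ∧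
    i * (2 * n - 2 * i - 1) * (catalan (i - 1) * catalan (n - i - 1)) =
      (2 * i - 3) * (n - i + 1) * (catalan (i - 2) * catalan (n - i)) := by
  obtain ⟨a, rfl⟩ := Nat.exists_eq_add_of_le hi
  obtain ⟨b, rfl, hab⟩ : ∃ b, n = 2 + a + (b + 1) ∧ a ≤ b :=
    ⟨n - (2 + a) - 1, by omega, by omega⟩
  simp only [show 2 + a - 1 = a + 1 from by omega,
    show 2 + a - 2 = a from by omega,
    show 2 + a + (b + 1) - (2 + a) - 1 = b from by omega,
    show 2 + a + (b + 1) - (2 + a) = b + 1 from by omega,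
    show 2 * (2 + a) - 3 = 2 * a + 1 from by omega,
    show 2 * (2 + a + (b + 1)) - 2 * (2 + a) - 1 = 2 * b + 1 from by omega]
  exact catalan_key a b hab
end

section
/- The solution T(x) of the combinatorial Dyson–Schwinger equation T(x) = 1 + x·B₊(T(x)^{1+s}) can be written as T(x) = 1 + ∑_t pe(t)·(∏_{v∈V(t)} binom(1+s, deg⁺(v))) · t · x^{|t|}, where pe(t) is the number of plane embeddings of the rooted tree t; equivalently, for any rooted tree t, (∏_v (1+s)_{deg⁺(v)})/|Aut(t)| = pe(t)·∏_v binom(1+s, deg⁺(v)). -/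
/-- Plane rooted trees: a root with an ordered list of subtrees. -/
inductive PTree : Type
  | node : List PTree → PTree

namespace PTree

/-- Two plane rooted trees are equivalent (represent the same abstract rooted tree) if
their lists of subtrees agree up to permutation and equivalence. -/
def Equiv : PTree → PTree → Prop
  | node l₁, node l₂ =>
      ∃ l₃ : List PTree, l₂.Perm l₃ ∧ l₁.length = l₃.length ∧
        ∀ p, ∀ _ : p ∈ l₁.zip l₃, Equiv p.1 p.2
termination_by t₁ _ => sizeOf t₁
decreasing_by
  have h1 := (List.of_mem_zip ‹_›).1
  have := List.sizeOf_lt_of_mem h1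
  simp only [node.sizeOf_spec]
  omega

/-- The number of vertices of a plane rooted tree. -/
def size : PTree → ℕ
  | node l => 1 + (l.attach.map fun c => size c.1).sum
termination_by t => sizeOf t
decreasing_by
  have := List.sizeOf_lt_of_mem c.2
  simp only [node.sizeOf_spec]
  omega

end PTree

/-- Abstract (non-plane) rooted trees: plane rooted trees up to equivalence. -/
def RTree : Type := Quot PTree.Equiv

/-- The number of vertices of a rooted tree. -/
noncomputable def RTree.size (t : RTree) : ℕ := (Quot.out t).size

/-- The falling factorial `α(α-1)⋯(α-k+1)` in a commutative ring. -/
def fallFac {K : Type*} [CommRing K] (α : K) : ℕ → K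
  | 0 => 1
  | k + 1 => fallFac α k * (α - (k : K))

/-- The generalized binomial coefficient `binom(α, k) = α(α-1)⋯(α-k+1)/k!`. -/
noncomputable def genBinom {K : Type*} [CommRing K] [Algebra ℚ K] (α : K) (k : ℕ) : K :=
  (k.factorial : ℚ)⁻¹ • fallFac α k

namespace PTree

/-- `∏_{v ∈ V(t)} (α)_{deg⁺(v)}`: the product over the vertices of the falling factorial
of `α` in the number of children. -/
def fallProd {K : Type*} [CommRing K] (α : K) : PTree → K
  | node l => fallFac α l.length * (l.attach.map fun c => fallProd α c.1).prod
termination_by t => sizeOf t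
decreasing_by
  have := List.sizeOf_lt_of_mem c.2
  simp only [node.sizeOf_spec]
  omega

/-- `∏_{v ∈ V(t)} binom(α, deg⁺(v))`. -/
noncomputable def binomProd {K : Type*} [CommRing K] [Algebra ℚ K] (α : K) : PTree → K
  | node l => genBinom α l.length * (l.attach.map fun c => binomProd α c.1).prod
termination_by t => sizeOf t
decreasing_by
  have := List.sizeOf_lt_of_mem c.2
  simp only [node.sizeOf_spec]
  omega

open scoped Classical in
/-- The order of the automorphism group of (the rooted tree underlying) a plane rooted
tree: the product of the automorphism counts of the subtrees times the factorials of the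
multiplicities of isomorphic subtrees. -/
noncomputable def autCard : PTree → ℕ
  | node l =>
      (l.attach.map fun c => autCard c.1).prod *
        (let m : Multiset RTree := (l.map (Quot.mk PTree.Equiv) : List RTree)
         m.toFinset.prod fun t => (m.count t).factorial)
termination_by t => sizeOf t
decreasing_by
  have := List.sizeOf_lt_of_mem c.2
  simp only [node.sizeOf_spec]
  omega

end PTree

/-- The number of plane embeddings of a rooted tree: the number of plane rooted trees
representing it. -/
noncomputable def RTree.peCount (t : RTree) : ℕ :=
  Nat.card {p : PTree // Quot.mk PTree.Equiv p = t}

/-- The rooted tree obtained from a forest (a finitely supported multiset of rooted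
trees) by attaching a new root to the root of every component. -/
noncomputable def nodeOfForest (m : RTree →₀ ℕ) : RTree :=
  Quot.mk PTree.Equiv (PTree.node (((Finsupp.toMultiset m).map Quot.out).toList))

/-- The Connes–Kreimer Hopf algebra: the free commutative `K`-algebra on rooted trees,
with forests (monomials) as a basis. -/
abbrev CKAlgebra (K : Type*) [CommRing K] := MvPolynomial RTree K

/-- The grafting operator `B₊`, sending each forest (monomial) to the tree obtained by
attaching a new root to all of its components. -/
noncomputable def Bplus {K : Type*} [CommRing K] (p : CKAlgebra K) : CKAlgebra K :=
  ∑ m ∈ p.support,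
    MvPolynomial.monomial (Finsupp.single (nodeOfForest m) 1) (MvPolynomial.coeff m p)

/-- `(1 + U)^α` for a power series `U` (sensible when `U` has zero constant term),
defined via the generalized binomial series. -/
noncomputable def onePlusPow {K : Type*} [CommRing K] [Algebra ℚ K]
    (α : K) (U : PowerSeries (CKAlgebra K)) : PowerSeries (CKAlgebra K) :=
  PowerSeries.mk fun n =>
    ∑ k ∈ Finset.range (n + 1),
      genBinom α k • PowerSeries.coeff (R := CKAlgebra K) n (U ^ k)

/-- The combinatorial Dyson--Schwinger equation `T(x) = 1 + x·B₊(T(x)^{1+s})`. -/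
noncomputable def SolvesDSE {K : Type*} [CommRing K] [Algebra ℚ K] (s : K)
    (T : PowerSeries (CKAlgebra K)) : Prop :=
  T = 1 + PowerSeries.X *
    PowerSeries.mk fun n =>
      Bplus (PowerSeries.coeff (R := CKAlgebra K) n (onePlusPow (1 + s) (T - 1)))

/-- The contribution `(∏_{v∈V(t)} (1+s)_{deg⁺ v}) ⬝ t / |Aut(t)|` of a rooted tree. -/
noncomputable def treeTerm {K : Type*} [CommRing K] [Algebra ℚ K] (s : K)
    (t : RTree) : CKAlgebra K :=
  ((((Quot.out t).autCard : ℚ)⁻¹ • (Quot.out t).fallProd (1 + s)) : K) •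
    (MvPolynomial.X t : CKAlgebra K)

/-- The explicit solution `1 + ∑_t (∏_v (1+s)_{deg⁺ v}) ⬝ t ⬝ x^{|t|} / |Aut(t)|` of the
combinatorial Dyson--Schwinger equation. -/
noncomputable def dseSolution {K : Type*} [CommRing K] [Algebra ℚ K] (s : K) :
    PowerSeries (CKAlgebra K) :=
  PowerSeries.mk fun n =>
    if n = 0 then 1 else ∑ᶠ t ∈ {t : RTree | t.size = n}, treeTerm s t

/-!
Since `binom(α, k) · k! = (α)_k`, the identity amounts to `pe(t) · |Aut(t)| = ∏_v (deg⁺ v)!`,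
which is proved by recursion at the root. The plane embeddings of a tree with root subtrees
`t₁, …, t_k` are the lists of plane trees whose multiset of classes is `{t₁, …, t_k}`. Choosing the
head of such a list and recursing shows that there are `k! / ∏_s m_s! · ∏_i pe(t_i)` of them,
where `m_s` is the multiplicity of `s` among the `t_i`; the factor `∏_s m_s!` is exactly the
contribution of the root to `|Aut(t)|`.
-/

open scoped Nat

theorem List.Forall₂.rel_coe {α β : Type*} {r : α → β → Prop} {l₁ : List α} {l₂ : List β}
    (h : List.Forall₂ r l₁ l₂) : Multiset.Rel r l₁ l₂ := by
  induction h with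
  | nil => exact .zero
  | cons hab _ ih => exact .cons hab ih

namespace Multiset

variable {α β : Type*}

theorem rel_coe_iff {r : α → β → Prop} {l₁ : List α} {l₂ : List β} :
    Rel r l₁ l₂ ↔ ∃ l₃, l₂.Perm l₃ ∧ List.Forall₂ r l₁ l₃ := by
  refine ⟨fun h => ?_, fun ⟨l₃, hperm, h⟩ => coe_eq_coe.2 hperm ▸ h.rel_coe⟩
  induction l₁ generalizing l₂ with
  | nil =>
    obtain rfl : l₂ = [] := (coe_eq_zero _).1 (rel_zero_left.1 h)
    exact ⟨[], .refl _, .nil⟩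
  | cons a l₁ ih =>
    obtain ⟨b, ⟨lb⟩, hab, hrel, hl₂⟩ := rel_cons_left.1 (cons_coe a l₁ ▸ h)
    obtain ⟨l₃, hperm, hl₃⟩ := ih hrel
    exact ⟨b :: l₃, (coe_eq_coe.1 hl₂).trans (hperm.cons b), .cons hab hl₃⟩

theorem Rel.trans_of_forall_mem {r : α → α → Prop} {s t u : Multiset α} (hst : Rel r s t)
    (htu : Rel r t u) (htrans : ∀ x ∈ s, ∀ y z, r x y → r y z → r x z) : Rel r s u := by
  induction hst generalizing u with
  | zero => exact htu
  | cons hab _ ih =>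
    obtain ⟨c, u', hbc, htu', rfl⟩ := rel_cons_left.1 htu
    exact .cons (htrans _ (mem_cons_self _ _) _ _ hab hbc)
      (ih htu' fun x hx => htrans x (mem_cons_of_mem hx))

theorem prod_factorial_count_eq_count_mul [DecidableEq α] {s : Multiset α} {a : α} (ha : a ∈ s) :
    ∏ b ∈ s.toFinset, (s.count b)! =
      s.count a * ∏ b ∈ (s.erase a).toFinset, ((s.erase a).count b)! := by
  obtain ⟨t, rfl⟩ := exists_cons_of_mem ha
  have hsub : ∏ b ∈ t.toFinset, (t.count b)! = ∏ b ∈ insert a t.toFinset, (t.count b)! :=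
    (Finset.prod_insert_of_eq_one_if_notMem fun h => by
      rw [count_eq_zero_of_notMem (by simpa using h), Nat.factorial_zero]).symm
  rw [erase_cons_head, hsub, toFinset_cons,
    ← Finset.mul_prod_erase _ _ (Finset.mem_insert_self a _),
    ← Finset.mul_prod_erase _ (fun b => (t.count b)!) (Finset.mem_insert_self a _),
    count_cons_self, Nat.factorial_succ, mul_assoc]
  congr 2
  exact Finset.prod_congr rfl fun b hb => by rw [count_cons_of_ne (Finset.ne_of_mem_erase hb)]

end Multiset

theorem inv_natCast_smul_mul_natCast {R : Type*} [Semiring R] [Module ℚ R] (x : R) {n : ℕ}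
    (hn : n ≠ 0) : (n : ℚ)⁻¹ • (x * n) = x := by
  rw [← nsmul_eq_mul', ← Nat.cast_smul_eq_nsmul ℚ, inv_smul_smul₀ (Nat.cast_ne_zero.2 hn)]

theorem genBinom_mul_factorial {K : Type*} [CommRing K] [Algebra ℚ K] (α : K) (k : ℕ) :
    genBinom α k * k ! = fallFac α k := by
  rw [genBinom, smul_mul_assoc, inv_natCast_smul_mul_natCast _ k.factorial_ne_zero]

section ListsOver

variable {α β : Type*} (f : α → β)

def ListsOver (M : Multiset β) : Type _ := {l : List α // Multiset.map f l = M}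

instance : Unique (ListsOver f 0) where
  default := ⟨[], rfl⟩
  uniq := fun ⟨l, hl⟩ => Subtype.ext (by simpa using hl)

variable [DecidableEq β]

def ListsOver.equivSigma {M : Multiset β} (hM : M ≠ 0) :
    ListsOver f M ≃ Σ b : M.toFinset, {a // f a = b} × ListsOver f (M.erase b) where
  toFun
    | ⟨[], h⟩ => absurd h.symm hM
    | ⟨a :: l, h⟩ => ⟨⟨f a, by simp [← h]⟩, ⟨a, rfl⟩, ⟨l, by simp [← h]⟩⟩
  invFun
    | ⟨b, ⟨a, ha⟩, ⟨l, hl⟩⟩ =>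
      ⟨a :: l, by
        rw [← Multiset.cons_coe, Multiset.map_cons, hl, ha]
        exact Multiset.cons_erase (Multiset.mem_toFinset.1 b.2)⟩
  left_inv
    | ⟨[], h⟩ => absurd h.symm hM
    | ⟨_ :: _, _⟩ => rfl
  right_inv
    | ⟨⟨_, _⟩, ⟨_, rfl⟩, _⟩ => rfl

theorem finite_listsOver (M : Multiset β) (hf : ∀ b ∈ M, Finite {a // f a = b}) :
    Finite (ListsOver f M) := by
  induction M using Multiset.strongInductionOn with | ih M ih =>
  rcases eq_or_ne M 0 with rfl | hM
  · infer_instance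
  have (b : M.toFinset) : Finite ({a // f a = b} × ListsOver f (M.erase b)) := by
    have hb := Multiset.mem_toFinset.1 b.2
    have := hf b hb
    have := ih _ (Multiset.erase_lt.2 hb) fun c hc => hf c (Multiset.mem_of_mem_erase hc)
    infer_instance
  exact .of_equiv _ (ListsOver.equivSigma f hM).symm

theorem card_listsOver_eq_sum {M : Multiset β} (hM : M ≠ 0)
    (hf : ∀ b ∈ M, Finite {a // f a = b}) :
    Nat.card (ListsOver f M) =
      ∑ b ∈ M.toFinset, Nat.card {a // f a = b} * Nat.card (ListsOver f (M.erase b)) := by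
  have (b : M.toFinset) : Finite ({a // f a = b} × ListsOver f (M.erase b)) := by
    have hb := Multiset.mem_toFinset.1 b.2
    have := hf b hb
    have := finite_listsOver f (M.erase b) fun c hc => hf c (Multiset.mem_of_mem_erase hc)
    infer_instance
  rw [Nat.card_congr (ListsOver.equivSigma f hM), Nat.card_sigma,
    ← Finset.sum_coe_sort M.toFinset]
  simp only [Nat.card_prod]

theorem card_listsOver_mul_prod_factorial (M : Multiset β)
    (hf : ∀ b ∈ M, Finite {a // f a = b}) :
    Nat.card (ListsOver f M) * ∏ b ∈ M.toFinset, (M.count b)! =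
      (Multiset.card M)! * (M.map fun b => Nat.card {a // f a = b}).prod := by
  induction M using Multiset.strongInductionOn with | ih M ih =>
  rcases eq_or_ne M 0 with rfl | hM
  · simp
  set fiber := fun b => Nat.card {a // f a = b}
  have step (b) (hb : b ∈ M.toFinset) :
      fiber b * Nat.card (ListsOver f (M.erase b)) * ∏ c ∈ M.toFinset, (M.count c)! =
        M.count b * ((Multiset.card M - 1)! * (M.map fiber).prod) := by
    rw [Multiset.mem_toFinset] at hb
    have hErase := ih _ (Multiset.erase_lt.2 hb) fun c hc => hf c (Multiset.mem_of_mem_erase hc)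
    rw [Multiset.card_erase_of_mem hb, Nat.pred_eq_sub_one] at hErase
    rw [Multiset.prod_factorial_count_eq_count_mul hb, ← Multiset.prod_map_erase hb]
    linear_combination (M.count b * fiber b) * hErase
  rw [card_listsOver_eq_sum f hM hf, Finset.sum_mul, Finset.sum_congr rfl step,
    ← Finset.sum_mul, Multiset.toFinset_sum_count_eq, ← mul_assoc,
    Nat.mul_factorial_pred (Multiset.card_pos.2 hM).ne']

end ListsOver

namespace PTree

theorem sizeOf_lt_of_mem_coe {c : PTree} {l : List PTree} (h : c ∈ (l : Multiset PTree)) :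
    sizeOf c < sizeOf (node l) := by
  have := List.sizeOf_lt_of_mem (Multiset.mem_coe.1 h)
  rw [node.sizeOf_spec]
  omega

theorem equiv_node_iff {l₁ l₂ : List PTree} :
    Equiv (node l₁) (node l₂) ↔ Multiset.Rel Equiv l₁ l₂ := by
  rw [Equiv, Multiset.rel_coe_iff]
  refine exists_congr fun l₃ => and_congr_right fun _ => ?_
  rw [List.forall₂_iff_zip]
  exact and_congr_right fun _ => ⟨fun h _ _ hab => h _ hab, fun h _ hp => h hp⟩

theorem equiv_refl : ∀ p : PTree, Equiv p p
  | node l => equiv_node_iff.2 (Multiset.rel_refl_of_refl_on fun c _ => equiv_refl c)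
decreasing_by exact sizeOf_lt_of_mem_coe ‹_›

theorem equiv_symm : ∀ {p q : PTree}, Equiv p q → Equiv q p
  | node l₁, node l₂, h => by
    rw [equiv_node_iff] at h ⊢
    exact Multiset.rel_flip.2 (h.mono fun _ hc _ _ hab => equiv_symm hab)
termination_by p => p
decreasing_by exact sizeOf_lt_of_mem_coe hc

theorem equiv_trans : ∀ {p q r : PTree}, Equiv p q → Equiv q r → Equiv p r
  | node l₁, node l₂, node l₃, h₁₂, h₂₃ => by
    rw [equiv_node_iff] at h₁₂ h₂₃ ⊢
    exact h₁₂.trans_of_forall_mem h₂₃ fun _ hc _ _ => equiv_trans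
termination_by p => p
decreasing_by exact sizeOf_lt_of_mem_coe hc

theorem equivalence_equiv : Equivalence Equiv :=
  ⟨equiv_refl, equiv_symm, equiv_trans⟩

theorem mk_eq_mk {p q : PTree} : Quot.mk Equiv p = Quot.mk Equiv q ↔ Equiv p q :=
  Quot.eq.trans equivalence_equiv.eqvGen_iff

theorem mk_node_eq_mk_node {l₁ l₂ : List PTree} :
    Quot.mk Equiv (node l₁) = Quot.mk Equiv (node l₂) ↔
      Multiset.map (Quot.mk Equiv) l₁ = Multiset.map (Quot.mk Equiv) l₂ := by
  rw [mk_eq_mk, equiv_node_iff, ← Multiset.rel_eq, Multiset.rel_map]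
  exact ⟨fun h => h.mono fun _ _ _ _ => mk_eq_mk.2, fun h => h.mono fun _ _ _ _ => mk_eq_mk.1⟩

def fiberNodeEquiv (l : List PTree) :
    {q // Quot.mk Equiv q = Quot.mk Equiv (node l)} ≃
      ListsOver (Quot.mk Equiv) (Multiset.map (Quot.mk Equiv) l) where
  toFun | ⟨node m, h⟩ => ⟨m, mk_node_eq_mk_node.1 h⟩
  invFun | ⟨m, h⟩ => ⟨node m, mk_node_eq_mk_node.2 h⟩
  left_inv | ⟨node _, _⟩ => rfl
  right_inv | ⟨_, _⟩ => rfl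

open scoped Classical in
theorem finite_fiber : ∀ p : PTree, Finite {q // Quot.mk Equiv q = Quot.mk Equiv p}
  | node l => by
    have := finite_listsOver (Quot.mk Equiv) (Multiset.map (Quot.mk Equiv) l) fun b hb => by
      obtain ⟨c, hc, rfl⟩ := Multiset.mem_map.1 hb
      exact finite_fiber c
    exact .of_equiv _ (fiberNodeEquiv l).symm
decreasing_by exact sizeOf_lt_of_mem_coe hc

/-- `∏_{v ∈ V(t)} (deg⁺ v)!`. -/
def degProd : PTree → ℕ
  | node l => l.length ! * (l.map degProd).prod

theorem degProd_pos : ∀ p : PTree, 0 < degProd p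
  | node l => by
    rw [degProd]
    refine Nat.mul_pos (Nat.factorial_pos _) <| List.prod_pos fun n hn => ?_
    obtain ⟨c, _, rfl⟩ := List.mem_map.1 hn
    exact degProd_pos c

section Products

variable {K : Type*} [CommRing K]

theorem fallProd_node (α : K) (l : List PTree) :
    fallProd α (node l) = fallFac α l.length * (l.map (fallProd α)).prod := by
  rw [fallProd, List.attach_map_val]

theorem binomProd_node [Algebra ℚ K] (α : K) (l : List PTree) :
    binomProd α (node l) = genBinom α l.length * (l.map (binomProd α)).prod := by
  rw [binomProd, List.attach_map_val]

theorem binomProd_mul_degProd [Algebra ℚ K] (α : K) :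
    ∀ p : PTree, binomProd α p * degProd p = fallProd α p
  | node l => by
    rw [binomProd_node, fallProd_node, degProd, Nat.cast_mul, Nat.cast_list_prod,
      List.map_map, ← genBinom_mul_factorial, mul_mul_mul_comm, ← List.prod_map_mul]
    congr 2
    exact List.map_congr_left fun c _ => binomProd_mul_degProd α c

end Products

open scoped Classical in
theorem autCard_node (l : List PTree) :
    autCard (node l) = (l.map autCard).prod *
      ∏ t ∈ (Multiset.map (Quot.mk Equiv) l).toFinset,
        ((Multiset.map (Quot.mk Equiv) l).count t)! := by
  rw [autCard, List.attach_map_val]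
  rfl

theorem peCount_mk_node (l : List PTree) :
    RTree.peCount (Quot.mk Equiv (node l)) =
      Nat.card (ListsOver (Quot.mk Equiv) (Multiset.map (Quot.mk Equiv) l)) :=
  Nat.card_congr (fiberNodeEquiv l)

theorem peCount_mul_autCard : ∀ p : PTree, RTree.peCount (Quot.mk Equiv p) * autCard p = degProd p
  | node l => by
    classical
    have hCount := card_listsOver_mul_prod_factorial (Quot.mk Equiv)
      (Multiset.map (Quot.mk Equiv) l) fun b hb => by
        obtain ⟨c, _, rfl⟩ := Multiset.mem_map.1 hb
        exact finite_fiber c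
    rw [Multiset.map_map, Multiset.card_map, Multiset.coe_card] at hCount
    rw [peCount_mk_node, autCard_node, degProd, mul_left_comm, hCount, Multiset.map_coe,
      Multiset.prod_coe, mul_left_comm, mul_comm (List.map autCard l).prod, ← List.prod_map_mul]
    congr 2
    exact List.map_congr_left fun c _ => peCount_mul_autCard c

end PTree

/-- The plane-tree form of the solution of the combinatorial Dyson--Schwinger equation:
for every rooted tree `t`,
`(∏_{v∈V(t)} (1+s)_{deg⁺ v}) / |Aut(t)| = pe(t) ⬝ ∏_{v∈V(t)} binom(1+s, deg⁺ v)`,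
where `pe(t)` is the number of plane embeddings of `t`.  Hence the solution can be
written as `T(x) = 1 + ∑_t pe(t) (∏_v binom(1+s, deg⁺ v)) ⬝ t ⬝ x^{|t|}`. -/
theorem dse_solution_plane_form {K : Type*} [CommRing K] [Algebra ℚ K] (s : K)
    (t : RTree) :
    (((Quot.out t).autCard : ℚ)⁻¹ • (Quot.out t).fallProd (1 + s) : K) =
      t.peCount • ((Quot.out t).binomProd (1 + s) : K) := by
  have hPeAut := PTree.peCount_mul_autCard (Quot.out t)
  rw [Quot.out_eq t] at hPeAut
  have hAut : (Quot.out t).autCard ≠ 0 :=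
    right_ne_zero_of_mul (hPeAut ▸ (PTree.degProd_pos _).ne')
  rw [← PTree.binomProd_mul_degProd, ← hPeAut, Nat.cast_mul, ← mul_assoc,
    inv_natCast_smul_mul_natCast _ hAut, nsmul_eq_mul']
end

section
/- For a power series A(u) = ∑_{k≥0} a_k u^k over K, the operator Λ on K[L] defined by Λ(f)(L) = ∫₀^L A(∂_u) f(u) du acts on the basis by Λ(L^n/n!) = ∑_{k=0}^n a_k · L^{n−k+1}/(n−k+1)!, and this Λ is a Hochschild 1-cocycle on the polynomial bialgebra K[L] (with L primitive). -/
open Polynomial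

variable {K : Type*} [CommRing K] [Algebra ℚ K]

/-- Formal integration `∫₀^L` of a polynomial. -/
noncomputable def polyIntegral (p : Polynomial K) : Polynomial K :=
  p.sum fun n c => (((n : ℚ) + 1)⁻¹ • c) • (Polynomial.X : Polynomial K) ^ (n + 1)

/-- The operator `f ↦ ∫₀^L A(∂_u) f(u) du` on `K[L]`, for `A(u) = ∑_k a_k u^k`. -/
noncomputable def cocycleOp (a : ℕ → K) (p : Polynomial K) : Polynomial K :=
  polyIntegral (∑ k ∈ Finset.range (p.natDegree + 1), a k • (Polynomial.derivative^[k] p))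

/-- The coproduct `Δ f = f(L ⊗ 1 + 1 ⊗ L)` on `K[L]`, realized in `K[L₁][L₂]` with the
first tensor factor as the outer variable `X` and the second as the inner variable
`C X`. -/
noncomputable def polyComul₂ (p : Polynomial K) : Polynomial (Polynomial K) :=
  Polynomial.aeval (Polynomial.X + Polynomial.C Polynomial.X) p

/-- `id ⊗ Λ`, applying `Λ` to the second (inner, coefficient) tensor factor. -/
noncomputable def idTensorApply (Λ : Polynomial K → Polynomial K)
    (G : Polynomial (Polynomial K)) : Polynomial (Polynomial K) :=
  ∑ j ∈ Finset.range (G.natDegree + 1),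
    Polynomial.C (Λ (G.coeff j)) * Polynomial.X ^ j

/-! In the divided-power basis `e n = L ^ n / n!` everything is explicit: `∂ e (n + 1) = e n`,
`∫₀^L e n = e (n + 1)` and `Δ e n = ∑_{i + j = n} e i ⊗ e j`. Hence
`Λ e n = ∑_{k + j = n} a k • e (j + 1)`, and both `Δ (Λ e n)` and `Λ e n ⊗ 1 + (id ⊗ Λ) (Δ e n)`
become the sum of `a k • e i ⊗ e (l + 1)` over `k + i + l = n`: in the first, the terms of
`Δ e (j + 1)` with a vanishing second index make up `Λ e n ⊗ 1`. The cocycle identity is linear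
in `f`, so the basis case suffices. -/

open Finset

theorem Finset.Nat.sum_antidiagonal_antidiagonal_comm {M : Type*} [AddCommMonoid M]
    (f : ℕ → ℕ → ℕ → M) (n : ℕ) :
    ∑ p ∈ antidiagonal n, ∑ q ∈ antidiagonal p.2, f p.1 q.1 q.2 =
      ∑ p ∈ antidiagonal n, ∑ q ∈ antidiagonal p.2, f q.1 p.1 q.2 := by
  simp only [Finset.Nat.sum_antidiagonal_eq_sum_range_succ_mk]
  rw [Finset.sum_comm' (t' := range (n + 1)) (s' := fun i => range (n - i + 1))
    (by intro k i; simp only [mem_range]; omega)]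
  simp only [Nat.sub_right_comm n]

section DividedPow

variable {A B : Type*} [CommRing A] [Algebra ℚ A] [CommRing B] [Algebra ℚ B]

noncomputable def dividedPow (n : ℕ) (x : A) : A :=
  (n.factorial : ℚ)⁻¹ • x ^ n

theorem dividedPow_zero (x : A) : dividedPow 0 x = 1 := by
  simp [dividedPow]

theorem map_dividedPow {F : Type*} [FunLike F A B] [RingHomClass F A B] (f : F) (n : ℕ)
    (x : A) : f (dividedPow n x) = dividedPow n (f x) := by
  rw [dividedPow, map_rat_smul, map_pow, dividedPow]

theorem dividedPow_add (n : ℕ) (x y : A) :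
    dividedPow n (x + y) = ∑ p ∈ antidiagonal n, dividedPow p.1 x * dividedPow p.2 y := by
  classical
  have h := (DividedPowers.RatAlgebra.dividedPowers (⊤ : Ideal A)).dpow_add
    (n := n) (Submodule.mem_top (x := x)) (Submodule.mem_top (x := y))
  simpa only [dividedPow, DividedPowers.RatAlgebra.dpow_eq_inv_fact_smul _ _ Submodule.mem_top,
    Ring.inverse_eq_inv'] using h

end DividedPow

section Operators

variable {R : Type*} [CommRing R]

noncomputable def truncDiffOp (a : ℕ → R) (N : ℕ) : Module.End R R[X] :=
  ∑ k ∈ range N, a k • derivative ^ k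

theorem truncDiffOp_apply (a : ℕ → R) (N : ℕ) (p : R[X]) :
    truncDiffOp a N p = ∑ k ∈ range N, a k • derivative^[k] p := by
  simp [truncDiffOp, Module.End.pow_apply]

/-- `polyTmul p q` is `p ⊗ q` in the encoding of `polyComul₂`. -/
noncomputable def polyTmul : R[X] →ₗ[R] R[X] →ₗ[R] R[X][X] :=
  (LinearMap.mul R R[X][X]).compl₁₂ (mapAlgHom (Algebra.ofId R R[X])).toLinearMap
    CAlgHom.toLinearMap

theorem polyTmul_apply (p q : R[X]) : polyTmul p q = p.map C * C q := by
  simp [polyTmul, coe_mapAlgHom]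

theorem polyTmul_one (p : R[X]) : polyTmul p 1 = p.map C := by
  rw [polyTmul_apply, C_1, mul_one]

noncomputable def idTensorₗ (Λ : R[X] →ₗ[R] R[X]) : R[X][X] →ₗ[R] R[X][X] :=
  lsum fun j => (monomial j).restrictScalars R ∘ₗ Λ

theorem idTensorApply_eq_idTensorₗ (Λ : R[X] →ₗ[R] R[X]) : idTensorApply Λ = idTensorₗ Λ := by
  ext1 G
  rw [idTensorApply, idTensorₗ, lsum_apply, sum_over_range' _ (by simp) _ G.natDegree.lt_succ_self]
  simp [C_mul_X_pow_eq_monomial]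

theorem idTensorₗ_polyTmul (Λ : R[X] →ₗ[R] R[X]) (p q : R[X]) :
    idTensorₗ Λ (polyTmul p q) = polyTmul p (Λ q) := by
  induction p using Polynomial.induction_on' with
  | add p₁ p₂ h₁ h₂ => simp only [map_add, LinearMap.add_apply, h₁, h₂]
  | monomial j c =>
    simp only [polyTmul_apply, map_monomial, monomial_mul_C, idTensorₗ, lsum_apply]
    rw [sum_monomial_index _ _ (by simp)]
    simp [← smul_eq_C_mul]

end Operators

theorem derivative_dividedPow_X_succ (n : ℕ) :
    derivative (dividedPow (n + 1) (X : K[X])) = dividedPow n X := by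
  have hfac : ((n + 1).factorial : ℚ)⁻¹ * ((n : ℚ) + 1) = (n.factorial : ℚ)⁻¹ := by
    rw [Nat.factorial_succ, Nat.cast_mul, mul_inv, mul_comm, ← mul_assoc]
    push_cast
    rw [mul_inv_cancel₀ (by positivity), one_mul]
  have hX : derivative (X ^ (n + 1) : K[X]) = ((n : ℚ) + 1) • X ^ n := by
    rw [derivative_X_pow_succ, ← smul_eq_C_mul]
    simp only [← Nat.cast_succ, Nat.cast_smul_eq_nsmul]
  rw [dividedPow, map_rat_smul, hX, smul_smul, hfac, dividedPow]

theorem iterate_derivative_dividedPow_X {k n : ℕ} (h : k ≤ n) :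
    derivative^[k] (dividedPow n (X : K[X])) = dividedPow (n - k) X := by
  induction k with
  | zero => rfl
  | succ k ih =>
    rw [Function.iterate_succ_apply', ih (by omega), show n - k = n - (k + 1) + 1 by omega,
      derivative_dividedPow_X_succ]

noncomputable def polyIntegralₗ : K[X] →ₗ[K] K[X] :=
  lsum fun n => ((n : ℚ) + 1)⁻¹ • LinearMap.toSpanSingleton K K[X] (X ^ (n + 1))

theorem coe_polyIntegralₗ : ⇑(polyIntegralₗ : K[X] →ₗ[K] K[X]) = polyIntegral := by
  ext1 p
  simp [polyIntegralₗ, polyIntegral, smul_assoc]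

theorem polyIntegral_dividedPow_X (n : ℕ) :
    polyIntegral (dividedPow n (X : K[X])) = dividedPow (n + 1) X := by
  rw [← coe_polyIntegralₗ, dividedPow, map_rat_smul, ← monomial_one_right_eq_X_pow, polyIntegralₗ,
    lsum_apply, sum_monomial_index _ _ (by simp)]
  simp [dividedPow, smul_smul, Nat.factorial_succ, mul_comm]

theorem cocycleOp_eq_polyIntegral_truncDiffOp (a : ℕ → K) {N : ℕ} {p : K[X]}
    (h : p.natDegree < N) : cocycleOp a p = polyIntegral (truncDiffOp a N p) := by
  rw [cocycleOp, truncDiffOp_apply]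
  congr 1
  refine sum_subset (range_subset_range.mpr h) fun k _ hk => ?_
  rw [iterate_derivative_eq_zero (by simp only [mem_range] at hk; omega), smul_zero]

noncomputable def cocycleOpₗ (a : ℕ → K) : K[X] →ₗ[K] K[X] where
  toFun := cocycleOp a
  map_add' p q := by
    have hp : p.natDegree < p.natDegree + q.natDegree + 1 := by omega
    have hq : q.natDegree < p.natDegree + q.natDegree + 1 := by omega
    have hpq : (p + q).natDegree < p.natDegree + q.natDegree + 1 :=
      (natDegree_add_le p q).trans_lt (by omega)
    simp only [cocycleOp_eq_polyIntegral_truncDiffOp a hp,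
      cocycleOp_eq_polyIntegral_truncDiffOp a hq, cocycleOp_eq_polyIntegral_truncDiffOp a hpq,
      ← coe_polyIntegralₗ, map_add]
  map_smul' c p := by
    have hp : p.natDegree < p.natDegree + 1 := p.natDegree.lt_succ_self
    have hcp : (c • p).natDegree < p.natDegree + 1 := (natDegree_smul_le c p).trans_lt hp
    simp only [cocycleOp_eq_polyIntegral_truncDiffOp a hp,
      cocycleOp_eq_polyIntegral_truncDiffOp a hcp, ← coe_polyIntegralₗ, map_smul,
      RingHom.id_apply]

theorem coe_cocycleOpₗ (a : ℕ → K) : ⇑(cocycleOpₗ a) = cocycleOp a := rfl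

theorem cocycleOp_dividedPow_X (a : ℕ → K) (n : ℕ) :
    cocycleOp a (dividedPow n (X : K[X])) =
      ∑ k ∈ range (n + 1), a k • dividedPow (n - k + 1) (X : K[X]) := by
  have hdeg : (dividedPow n (X : K[X])).natDegree < n + 1 :=
    ((natDegree_smul_le _ _).trans (natDegree_X_pow_le n)).trans_lt n.lt_succ_self
  rw [cocycleOp_eq_polyIntegral_truncDiffOp a hdeg, truncDiffOp_apply, ← coe_polyIntegralₗ,
    map_sum]
  refine sum_congr rfl fun k hk => ?_
  rw [map_smul, iterate_derivative_dividedPow_X (by simp only [mem_range] at hk; omega),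
    coe_polyIntegralₗ, polyIntegral_dividedPow_X]

theorem cocycleOp_dividedPow_X_eq_sum_antidiagonal (a : ℕ → K) (n : ℕ) :
    cocycleOp a (dividedPow n (X : K[X])) =
      ∑ p ∈ antidiagonal n, a p.1 • dividedPow (p.2 + 1) (X : K[X]) := by
  rw [cocycleOp_dividedPow_X, Finset.Nat.sum_antidiagonal_eq_sum_range_succ
    (fun k j => a k • dividedPow (j + 1) (X : K[X]))]

theorem polyComul₂_dividedPow_X (n : ℕ) :
    polyComul₂ (dividedPow n (X : K[X])) =
      ∑ p ∈ antidiagonal n, polyTmul (dividedPow p.1 X) (dividedPow p.2 X) := by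
  rw [polyComul₂, map_dividedPow, aeval_X, dividedPow_add]
  refine sum_congr rfl fun p _ => ?_
  rw [polyTmul_apply, ← coe_mapRingHom, map_dividedPow, map_dividedPow, coe_mapRingHom, map_X]

theorem polyComul₂_dividedPow_X_succ (m : ℕ) :
    polyComul₂ (dividedPow (m + 1) (X : K[X])) = polyTmul (dividedPow (m + 1) X) 1 +
      ∑ q ∈ antidiagonal m, polyTmul (dividedPow q.1 X) (dividedPow (q.2 + 1) X) := by
  rw [polyComul₂_dividedPow_X, Finset.Nat.sum_antidiagonal_succ', dividedPow_zero]

theorem polyComul₂_cocycleOp_dividedPow_X (a : ℕ → K) (n : ℕ) :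
    polyComul₂ (cocycleOp a (dividedPow n X)) = (cocycleOp a (dividedPow n X)).map C +
      ∑ p ∈ antidiagonal n, ∑ q ∈ antidiagonal p.2,
        a p.1 • polyTmul (dividedPow q.1 X) (dividedPow (q.2 + 1) X) := by
  rw [← polyTmul_one, cocycleOp_dividedPow_X_eq_sum_antidiagonal, polyComul₂, map_sum, map_sum,
    LinearMap.sum_apply, ← sum_add_distrib]
  refine sum_congr rfl fun p _ => ?_
  rw [map_smul, LinearMap.map_smul₂, ← smul_sum, ← smul_add]
  exact congrArg _ (polyComul₂_dividedPow_X_succ p.2)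

theorem idTensorApply_cocycleOp_polyComul₂_dividedPow_X (a : ℕ → K) (n : ℕ) :
    idTensorApply (cocycleOp a) (polyComul₂ (dividedPow n X)) =
      ∑ p ∈ antidiagonal n, ∑ q ∈ antidiagonal p.2,
        a q.1 • polyTmul (dividedPow p.1 X) (dividedPow (q.2 + 1) X) := by
  rw [← coe_cocycleOpₗ, idTensorApply_eq_idTensorₗ, polyComul₂_dividedPow_X, map_sum]
  refine sum_congr rfl fun p _ => ?_
  rw [idTensorₗ_polyTmul, coe_cocycleOpₗ, cocycleOp_dividedPow_X_eq_sum_antidiagonal, map_sum]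
  simp only [map_smul]

def IsHochschildCocycle (Λ : K[X] → K[X]) : Prop :=
  ∀ f : K[X], polyComul₂ (Λ f) = (Λ f).map C + idTensorApply Λ (polyComul₂ f)

theorem Polynomial.induction_on_dividedPow {motive : K[X] → Prop} (p : K[X])
    (add : ∀ p q, motive p → motive q → motive (p + q))
    (smul : ∀ (c : K) p, motive p → motive (c • p))
    (dividedPow_X : ∀ n, motive (dividedPow n X)) : motive p := by
  induction p using Polynomial.induction_on' with
  | add p q hp hq => exact add p q hp hq
  | monomial n c =>
    have h : monomial n c = c • algebraMap ℚ K n.factorial • dividedPow n (X : K[X]) := by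
      rw [algebraMap_smul, dividedPow, smul_smul, mul_inv_cancel₀ (by positivity), one_smul,
        smul_X_eq_monomial]
    exact h ▸ smul _ _ (smul _ _ (dividedPow_X n))

theorem isHochschildCocycle_of_dividedPow (Λ : K[X] →ₗ[K] K[X])
    (h : ∀ n, polyComul₂ (Λ (dividedPow n X)) =
      (Λ (dividedPow n X)).map C + idTensorApply Λ (polyComul₂ (dividedPow n X))) :
    IsHochschildCocycle Λ := by
  intro f
  simp only [idTensorApply_eq_idTensorₗ, ← polyTmul_one] at h ⊢
  induction f using Polynomial.induction_on_dividedPow with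
  | add p q hp hq =>
    simp only [polyComul₂, map_add, LinearMap.add_apply] at hp hq ⊢
    rw [hp, hq]
    abel
  | smul c p hp =>
    simp only [polyComul₂, map_smul, LinearMap.smul_apply] at hp ⊢
    rw [hp, smul_add]
  | dividedPow_X n => exact h n

/-- The operator `Λ f = ∫₀^L A(∂_u) f(u) du` acts on the basis of `K[L]` by
`Λ(L^n/n!) = ∑_{k=0}^n a_k L^{n-k+1}/(n-k+1)!`, and `Λ` is a Hochschild 1-cocycle on the
polynomial bialgebra `K[L]` (with `L` primitive):
`Δ(Λ f) = (Λ f) ⊗ 1 + (id ⊗ Λ)(Δ f)`. -/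
theorem cocycleOp_basis_and_cocycle (a : ℕ → K) :
    (∀ n : ℕ, cocycleOp a ((n.factorial : ℚ)⁻¹ • (Polynomial.X : Polynomial K) ^ n) =
      ∑ k ∈ Finset.range (n + 1),
        a k • (((n - k + 1).factorial : ℚ)⁻¹ •
          (Polynomial.X : Polynomial K) ^ (n - k + 1))) ∧
    (∀ f : Polynomial K,
      polyComul₂ (cocycleOp a f) =
        Polynomial.map (Polynomial.C : K →+* Polynomial K) (cocycleOp a f) +
          idTensorApply (cocycleOp a) (polyComul₂ f)) :=
  ⟨cocycleOp_dividedPow_X a, isHochschildCocycle_of_dividedPow (cocycleOpₗ a) fun n => by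
    rw [coe_cocycleOpₗ, polyComul₂_cocycleOp_dividedPow_X, idTensorApply_cocycleOp_polyComul₂_dividedPow_X,
      Finset.Nat.sum_antidiagonal_antidiagonal_comm
        (fun k i l => a k • polyTmul (dividedPow i (X : K[X])) (dividedPow (l + 1) X))]⟩
end

section
/- Suppose power series A(x), B(x) over a commutative ℚ-algebra satisfy A(x) = x·B(A(x)) with B(0) invertible. If B(x) = x·F(x) with F(ρ) = ∑_{j≥0} c_j ρ^{j−1} a formal Laurent series with c_0 ≠ 0, i.e. A(x) = x·A(x)·F(A(x)), then for n > 1 the coefficients are [x^n]A(x) = ∑_{j=1}^{n−1} (c_0^{n−j}/(n−j)!) · B_{n−1,j}(1!c_1, 2!c_2, 3!c_3, …), where B_{n,j} denotes the partial Bell polynomials, and [x¹]A(x) = c_0. -/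
/-!
Write `H = ∑ c_j x^j`, so that the hypothesis says `A = x · H(A)`. Lagrange inversion in the form
`(k + m) [x^{k+m}] A^k = k [x^m] H^{k+m}` is proved by strong induction on `m`: expanding
`A^k = x^k H(A)^k` and using the induction hypothesis on each `m [x^m] A^j` turns
`m (k + m) [x^{k+m}] A^k` into `(k + m) [x^{m-1}] (H^k)' H^m = k [x^{m-1}] (H^{k+m})'`.
For `k = 1`, the binomial expansion of `H^n = (c_0 + (H - c_0))^n` turns `[x^{n-1}] H^n / n`
into the Bell-polynomial sum.
-/

open PowerSeries

/-- The value `B_{n,j}(1!c_1, 2!c_2, …)` of the partial Bell polynomial, defined by the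
generating identity `(1/j!) (∑_{m>0} c_m t^m)^j = ∑_{n≥j} B_{n,j}(1!c_1, …) t^n/n!`. -/
noncomputable def bellValue {K : Type*} [CommRing K] [Algebra ℚ K] (c : ℕ → K)
    (n j : ℕ) : K :=
  (n.factorial : ℚ) •
    ((j.factorial : ℚ)⁻¹ •
      PowerSeries.coeff (R := K) n ((PowerSeries.mk fun m => if m = 0 then 0 else c m) ^ j))

open Finset

theorem Derivation.nsmul_leibniz_pow_mul_pow {R S : Type*} [CommSemiring R] [CommRing S]
    [Algebra R S] (D : Derivation R S S) (a : S) (k m : ℕ) :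
    (k + m) • (D (a ^ k) * a ^ m) = k • D (a ^ (k + m)) := by
  rcases k with _ | k
  · simp
  · simp only [Derivation.leibniz_pow, smul_eq_mul, nsmul_eq_mul]
    rw [show k + 1 + m - 1 = k + m by omega, Nat.add_sub_cancel, pow_add]
    push_cast
    ring

theorem Nat.inv_cast_mul_cast_choose {n j : ℕ} (hn : n ≠ 0) (hj : j ≤ n) :
    (n : ℚ)⁻¹ * n.choose j =
      ((n - j).factorial : ℚ)⁻¹ * ((n - 1).factorial * (j.factorial : ℚ)⁻¹) := by
  rw [Nat.cast_choose ℚ hj, ← Nat.mul_factorial_pred hn]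
  push_cast
  field_simp

namespace PowerSeries

section CommRing

variable {R : Type*} [CommRing R] {A : R⟦X⟧}

theorem coeff_pow_eq_zero_of_lt (hA : constantCoeff A = 0) {n j : ℕ} (h : n < j) :
    coeff n (A ^ j) = 0 :=
  coeff_of_lt_order n <|
    (Nat.cast_lt.mpr h).trans_le (le_order_pow_of_constantCoeff_eq_zero j hA)

theorem coeff_subst_eq_sum_range (hA : constantCoeff A = 0) (f : R⟦X⟧) (n : ℕ) :
    coeff n (f.subst A) = ∑ j ∈ range (n + 1), coeff j f * coeff n (A ^ j) := by
  rw [coeff_subst' (HasSubst.of_constantCoeff_zero' hA),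
    finsum_eq_finsetSum_of_support_subset _ (s := range (n + 1))]
  · simp only [smul_eq_mul]
  · intro j hj
    rw [coe_range, Set.mem_Iio, Nat.lt_succ_iff]
    by_contra! hnj
    exact hj (by simp only [coeff_pow_eq_zero_of_lt hA hnj, smul_zero])

theorem mk_sum_coeff_pow_eq_subst (hA : constantCoeff A = 0) (c : ℕ → R) :
    (mk fun n => ∑ j ∈ range (n + 1), c j * coeff n (A ^ j)) = (mk c).subst A := by
  ext n
  simp only [coeff_mk, coeff_subst_eq_sum_range hA]

theorem coeff_derivative_mul (f g : R⟦X⟧) (p : ℕ) :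
    coeff p (d⁄dX R f * g) = ∑ j ∈ range (p + 2), j • (coeff j f * coeff (p + 1 - j) g) := by
  rw [← Nat.sum_antidiagonal_eq_sum_range_succ (fun a b => a • (coeff a f * coeff b g)),
    Nat.sum_antidiagonal_succ, coeff_mul]
  simp only [zero_smul, zero_add, coeff_derivative, nsmul_eq_mul]
  push_cast
  exact sum_congr rfl fun x _ => by ring

theorem lagrange_inversion [IsAddTorsionFree R] {H : R⟦X⟧} (hA : constantCoeff A = 0)
    (hAH : A = X * H.subst A) (k m : ℕ) :
    (k + m) • coeff (k + m) (A ^ k) = k • coeff m (H ^ (k + m)) := by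
  induction m using Nat.strong_induction_on generalizing k with
  | _ m ih =>
  have hcoeff : coeff (k + m) (A ^ k) =
      ∑ j ∈ range (m + 1), coeff j (H ^ k) * coeff m (A ^ j) := by
    conv_lhs => rw [hAH]
    rw [mul_pow, add_comm, coeff_X_pow_mul, ← subst_pow (HasSubst.of_constantCoeff_zero' hA),
      coeff_subst_eq_sum_range hA]
  rcases m with _ | p
  · simp only [add_zero] at hcoeff
    simp [hcoeff]
  have hpow : ∀ j ∈ range (p + 2),
      (p + 1) • coeff (p + 1) (A ^ j) = j • coeff (p + 1 - j) (H ^ (p + 1)) := by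
    intro j hj
    rcases j with _ | j
    · simp
    have := ih (p + 1 - (j + 1)) (by omega) (j + 1)
    rwa [Nat.add_sub_cancel' (by simp at hj; omega)] at this
  have hsum : (p + 1) • coeff (k + (p + 1)) (A ^ k) =
      coeff p (d⁄dX R (H ^ k) * H ^ (p + 1)) := by
    rw [hcoeff, smul_sum, coeff_derivative_mul]
    refine sum_congr rfl fun j hj => ?_
    rw [← mul_smul_comm, hpow j hj, mul_smul_comm]
  apply nsmul_right_injective p.succ_ne_zero
  calc (p + 1) • ((k + (p + 1)) • coeff (k + (p + 1)) (A ^ k))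
      = (k + (p + 1)) • coeff p (d⁄dX R (H ^ k) * H ^ (p + 1)) := by rw [smul_comm, hsum]
    _ = coeff p (k • d⁄dX R (H ^ (k + (p + 1)))) := by
      rw [← map_nsmul, Derivation.nsmul_leibniz_pow_mul_pow]
    _ = (p + 1) • (k • coeff (p + 1) (H ^ (k + (p + 1)))) := by
      rw [map_nsmul, coeff_derivative, mul_comm, ← Nat.cast_succ, ← nsmul_eq_mul, smul_comm]

end CommRing

theorem inv_smul_coeff_pow_mk_eq_sum_bellValue {K : Type*} [CommRing K] [Algebra ℚ K]
    (c : ℕ → K) {n : ℕ} (hn : 1 < n) :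
    (n : ℚ)⁻¹ • coeff (n - 1) (mk c ^ n) =
      ∑ j ∈ Icc 1 (n - 1), ((n - j).factorial : ℚ)⁻¹ • (c 0 ^ (n - j) * bellValue c (n - 1) j) := by
  set P : K⟦X⟧ := mk fun m => if m = 0 then 0 else c m
  have hsplit : mk c = P + C (c 0) := by
    ext i
    rcases eq_or_ne i 0 with rfl | hi <;> simp [P, coeff_C, *]
  have hterm : ∀ j, coeff (n - 1) (P ^ j * C (c 0) ^ (n - j) * (n.choose j : K⟦X⟧)) =
      n.choose j • (c 0 ^ (n - j) * coeff (n - 1) (P ^ j)) := by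
    intro j
    rw [← map_pow, ← map_natCast C, mul_assoc, ← map_mul, coeff_mul_C, nsmul_eq_mul]
    ring
  have hcoeff : coeff (n - 1) (mk c ^ n) =
      ∑ j ∈ Icc 1 (n - 1), n.choose j • (c 0 ^ (n - j) * coeff (n - 1) (P ^ j)) := by
    rw [hsplit, add_pow, map_sum, sum_congr rfl fun j _ => hterm j]
    refine (sum_subset (fun j hj => ?_) fun j hj hj' => ?_).symm
    · simp at hj ⊢
      omega
    · obtain rfl | rfl : j = 0 ∨ n = j := by simp at hj hj'; omega
      · simp [coeff_one, show n - 1 ≠ 0 by omega]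
      · have hP : constantCoeff P = 0 := by simp [P]
        simp [coeff_pow_eq_zero_of_lt hP (show n - 1 < n by omega)]
  rw [hcoeff, smul_sum]
  refine sum_congr rfl fun j hj => ?_
  rw [← Nat.cast_smul_eq_nsmul ℚ, smul_smul,
    Nat.inv_cast_mul_cast_choose (by omega) (by simp at hj; omega), bellValue, mul_smul,
    mul_smul, mul_smul_comm, mul_smul_comm]

end PowerSeries

theorem lagrange_bell_coefficients_general {K : Type*} [CommRing K] [Algebra ℚ K]
    (c : ℕ → K) (A : PowerSeries K)
    (hEq : A = PowerSeries.X *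
      PowerSeries.mk fun n => ∑ j ∈ Finset.range (n + 1),
        c j * PowerSeries.coeff (R := K) n (A ^ j)) :
    PowerSeries.coeff (R := K) 1 A = c 0 ∧
    ∀ n : ℕ, 1 < n →
      PowerSeries.coeff (R := K) n A =
        ∑ j ∈ Finset.Icc 1 (n - 1),
          ((n - j).factorial : ℚ)⁻¹ • (c 0 ^ (n - j) * bellValue c (n - 1) j) := by
  have hA : constantCoeff A = 0 := by
    rw [hEq]
    simp
  rw [mk_sum_coeff_pow_eq_subst hA] at hEq
  have := IsAddTorsionFree.of_module_rat K
  refine ⟨by simpa using lagrange_inversion hA hEq 1 0, fun n hn => ?_⟩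
  have hlag := lagrange_inversion hA hEq 1 (n - 1)
  rw [Nat.add_sub_cancel' (by omega), pow_one, one_smul, ← Nat.cast_smul_eq_nsmul ℚ] at hlag
  rw [← inv_smul_coeff_pow_mk_eq_sum_bellValue c hn, ← hlag, inv_smul_smul₀ (by positivity)]

/-- Lagrange inversion for the linear Dyson–Schwinger equation: if `A(x) = x·A(x)·F(A(x))`
with `F(ρ) = ∑_{j≥0} c_j ρ^{j-1}` and `c_0` invertible (here `A·F(A) = ∑_j c_j A^j`), then
`[x¹]A = c_0` and for `n > 1`,
`[x^n]A = ∑_{j=1}^{n-1} (c_0^{n-j}/(n-j)!)·B_{n-1,j}(1!c_1, 2!c_2, …)`. -/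
theorem lagrange_bell_coefficients {K : Type*} [CommRing K] [Algebra ℚ K]
    (c : ℕ → K) (hc : IsUnit (c 0)) (A : PowerSeries K)
    (hA0 : PowerSeries.coeff (R := K) 0 A = 0)
    (hEq : A = PowerSeries.X *
      PowerSeries.mk fun n => ∑ j ∈ Finset.range (n + 1),
        c j * PowerSeries.coeff (R := K) n (A ^ j)) :
    PowerSeries.coeff (R := K) 1 A = c 0 ∧
    ∀ n : ℕ, 1 < n →
      PowerSeries.coeff (R := K) n A =
        ∑ j ∈ Finset.Icc 1 (n - 1),
          ((n - j).factorial : ℚ)⁻¹ • (c 0 ^ (n - j) * bellValue c (n - 1) j) :=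
  lagrange_bell_coefficients_general c A hEq
end
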